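/- arXiv:1804.10608 — 4 statements merged into one kernel-verified Lean document; each statement's English description precedes it below -/
import Mathlib

section
/- If a flow is LRQ-regulated with rate r (i.e., for consecutive packets n and n+1 with arrival times A_n ≤ A_{n+1} and packet lengths l_n, the separation satisfies A_{n+1} - A_n ≥ l_n / r), and every packet has length at most L, then the flow satisfies the leaky-bucket arrival curve constraint r·t + L; that is, for all m ≤ n, the total length of packets m through n is at most r·(A_n - A_m) + L. -/
/-! An LRQ regulator forces each packet to be followed by a gap of at least `l k / r`, i.e.
`l k ≤ r * (A (k + 1) - A k)`. Summing over `k ∈ [m, n)` telescopes to `r * (A n - A m)`,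
and the last packet `n` adds at most `L`. -/

open Finset

section Telescoping

variable {α : Type*} [AddCommGroup α] [PartialOrder α] [IsOrderedAddMonoid α] {f g : ℕ → α}

theorem Finset.sum_Ico_le_sub_of_le_sub_succ (h : ∀ k, f k ≤ g (k + 1) - g k) {m n : ℕ}
    (hmn : m ≤ n) : ∑ k ∈ Ico m n, f k ≤ g n - g m :=
  (sum_le_sum fun k _ ↦ h k).trans_eq (sum_Ico_sub g hmn)

theorem Finset.sum_Icc_le_sub_add_of_le_sub_succ (h : ∀ k, f k ≤ g (k + 1) - g k) {m n : ℕ}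
    (hmn : m ≤ n) : ∑ k ∈ Icc m n, f k ≤ g n - g m + f n := by
  rw [← Ico_add_one_right_eq_Icc, sum_Ico_succ_top hmn]
  grw [sum_Ico_le_sub_of_le_sub_succ h hmn]

end Telescoping

theorem lrq_implies_leaky_bucket_general
    (A l : ℕ → ℝ) (r L : ℝ)
    (hr : 0 < r)
    (hl_max : ∀ n, l n ≤ L)
    (hLRQ : ∀ n, A (n + 1) - A n ≥ l n / r) :
    ∀ m n, m ≤ n →
      (∑ k ∈ Finset.Icc m n, l k) ≤ r * (A n - A m) + L := by
  intro m n hmn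
  have hgap : ∀ k, l k ≤ r * A (k + 1) - r * A k := fun k ↦ by
    rw [← mul_sub]
    exact (div_le_iff₀' hr).1 (hLRQ k)
  calc ∑ k ∈ Icc m n, l k ≤ r * A n - r * A m + l n :=
        sum_Icc_le_sub_add_of_le_sub_succ (g := (r * A ·)) hgap hmn
    _ ≤ r * (A n - A m) + L := by linarith [hl_max n]

/-- An LRQ-regulated flow with rate `r` and maximum packet size `L`
satisfies the leaky-bucket arrival curve `r·t + L`. -/
theorem lrq_implies_leaky_bucket
    (A l : ℕ → ℝ) (r L : ℝ)
    (hr : 0 < r)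
    (hA : Monotone A)
    (hl_pos : ∀ n, 0 < l n)
    (hl_max : ∀ n, l n ≤ L)
    (hLRQ : ∀ n, A (n + 1) - A n ≥ l n / r) :
    ∀ m n, m ≤ n →
      (∑ k ∈ Finset.Icc m n, l k) ≤ r * (A n - A m) + L :=
  lrq_implies_leaky_bucket_general A l r L hr hl_max hLRQ
end

section
/- Let β : ℝ≥0 → ℝ≥0 be a service curve for a FIFO packet system: for every time t there exists s ≤ t with O(t) ≥ N(s) + β(t−s), where N is the cumulative arrival function and O the cumulative output. Then for every packet n there exists m ≤ n such that β(Q_n − A_m) ≤ Σ_{k=m}^{n−1} l_k, where A_k is the arrival time of packet k, l_k its length, and Q_n the time at which packet n starts service (so O(Q_n⁺) = l_1 + ⋯ + l_{n−1}). -/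
/-!
Take the service witness `s` for `t = Q n` and let `m` be the first packet arriving after `s`.
Then `N s` counts at least packets `1, …, m - 1`, so the service inequality leaves
`β (Q n - s) ≤ ∑_{k=m}^{n-1} l k`, and `β (Q n - A m) ≤ β (Q n - s)` since `s < A m`.
Such an `m ≤ n` exists: otherwise packet `n` has arrived by `s`, and `N s` would exceed
`O (Q n) = ∑_{k<n} l k`.
-/

open Finset

theorem exists_first_index_lt_of_exists {A : ℕ → ℝ} {s : ℝ} {n : ℕ}
    (h : ∃ k ∈ Icc 1 n, s < A k) :
    ∃ m ∈ Icc 1 n, s < A m ∧ ∀ k ∈ Ico 1 m, A k ≤ s := by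
  classical
  have hex : ∃ k, 1 ≤ k ∧ s < A k := by
    obtain ⟨k, hk, hsk⟩ := h
    exact ⟨k, (mem_Icc.1 hk).1, hsk⟩
  obtain ⟨k, hk, hsk⟩ := h
  obtain ⟨hm1, hsm⟩ := Nat.find_spec hex
  refine ⟨Nat.find hex, mem_Icc.2 ⟨hm1, ?_⟩, hsm, fun j hj => ?_⟩
  · exact (Nat.find_min' hex ⟨(mem_Icc.1 hk).1, hsk⟩).trans (mem_Icc.1 hk).2
  · obtain ⟨hj1, hjm⟩ := mem_Ico.1 hj
    exact not_lt.1 fun hsj => Nat.find_min hex hjm ⟨hj1, hsj⟩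

theorem sum_Ico_le_sum_filter_arrived {A l : ℕ → ℝ} {s : ℝ} {m P : ℕ}
    (hl : ∀ k, 0 ≤ l k) (hmP : m ≤ P + 1) (hA : ∀ k ∈ Ico 1 m, A k ≤ s) :
    ∑ k ∈ Ico 1 m, l k ≤ ∑ k ∈ (Icc 1 P).filter (fun k => A k ≤ s), l k := by
  refine sum_le_sum_of_subset_of_nonneg (fun k hk => ?_) fun k _ _ => hl k
  have hk' := mem_Ico.1 hk
  exact mem_filter.2 ⟨mem_Icc.2 ⟨hk'.1, by omega⟩, hA k hk⟩

theorem service_curve_packet_bound_general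
    (P : ℕ) (A l Q : ℕ → ℝ) (N O β : ℝ → ℝ)
    (hl_pos : ∀ k, 0 < l k)
    (hβ_mono : Monotone β)
    (hβ_nonneg : ∀ t, 0 ≤ β t)
    (hN : ∀ s : ℝ, N s = ∑ k ∈ (Finset.Icc 1 P).filter (fun k => A k ≤ s), l k)
    (hservice : ∀ t : ℝ, ∃ s : ℝ, s ≤ t ∧ O t ≥ N s + β (t - s))
    (n : ℕ) (hn1 : 1 ≤ n) (hnP : n ≤ P)
    (hO : O (Q n) = ∑ k ∈ Finset.Ico 1 n, l k) :
    ∃ m, 1 ≤ m ∧ m ≤ n ∧ β (Q n - A m) ≤ ∑ k ∈ Finset.Ico m n, l k := by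
  obtain ⟨s, -, hserv⟩ := hservice (Q n)
  have hl : ∀ k, 0 ≤ l k := fun k => (hl_pos k).le
  by_cases hlate : ∃ k ∈ Icc 1 n, s < A k
  · obtain ⟨m, hm, hsm, hearly⟩ := exists_first_index_lt_of_exists hlate
    obtain ⟨hm1, hmn⟩ := mem_Icc.1 hm
    have harrived := sum_Ico_le_sum_filter_arrived (P := P) hl (by omega) hearly
    rw [← sum_Ico_consecutive _ hm1 hmn] at hO
    refine ⟨m, hm1, hmn, ?_⟩
    calc β (Q n - A m) ≤ β (Q n - s) := hβ_mono (by linarith)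
      _ ≤ ∑ k ∈ Ico m n, l k := by linarith [hN s]
  · push Not at hlate
    have harrived := sum_Ico_le_sum_filter_arrived (m := n + 1) (P := P) hl
      (by omega) fun k hk => hlate k (by rw [mem_Ico] at hk; rw [mem_Icc]; omega)
    rw [sum_Ico_succ_top hn1] at harrived
    linarith [hl_pos n, hβ_nonneg (Q n - s), hN s]

/-- Lemma 3: if `β` is a service curve for a FIFO packet system, then
for every packet `n` there is `m ≤ n` with `β (Q n − A m) ≤ Σ_{k=m}^{n−1} l k`.
Packets are indexed `1, 2, …, P`; `N` is the cumulative arrival function and `O`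
the cumulative output. -/
theorem service_curve_packet_bound
    (P : ℕ) (A l Q : ℕ → ℝ) (N O β : ℝ → ℝ)
    (hA : Monotone A)
    (hl_pos : ∀ k, 0 < l k)
    (hβ_mono : Monotone β)
    (hβ_nonneg : ∀ t, 0 ≤ β t)
    (hβ_zero : β 0 = 0)
    (hN : ∀ s : ℝ, N s = ∑ k ∈ (Finset.Icc 1 P).filter (fun k => A k ≤ s), l k)
    (hservice : ∀ t : ℝ, ∃ s : ℝ, s ≤ t ∧ O t ≥ N s + β (t - s))
    (n : ℕ) (hn1 : 1 ≤ n) (hnP : n ≤ P)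
    (hQ : A n ≤ Q n)
    (hO : O (Q n) = ∑ k ∈ Finset.Ico 1 n, l k) :
    ∃ m, 1 ≤ m ∧ m ≤ n ∧ β (Q n - A m) ≤ ∑ k ∈ Finset.Ico m n, l k :=
  service_curve_packet_bound_general P A l Q N O β hl_pos hβ_mono hβ_nonneg hN hservice n hn1 hnP hO
end

section
/- Suppose a server offers rate-latency service curve β(t) = R·max(t−T, 0) to an aggregate of flows, each flow f having affine arrival curve α_f(t) = r_f·t + b_f with Σ_f r_f ≤ R. Consider a tagged packet n belonging to flow f. If for all m ≤ n the cumulative length of packets m,…,n−1 in the FIFO queue satisfies Σ_{k=m}^{n−1} l_k ≤ Σ_{f'} α_{f'}(A_n − A_m) − ψ, for some constant ψ ≥ 0, and there exists m ≤ n with β(Q_n − A_m) ≤ Σ_{k=m}^{n−1} l_k, then the queuing delay satisfies Q_n − A_n ≤ T + (Σ_{f'} b_{f'} − ψ)/R. -/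
/-!
Service gives `R (Q_n - A_m - T) ≤ L` for the backlog `L = ∑_{k=m}^{n-1} l_k`, and the arrival
constraint bounds `L` by `ρ t + σ - ψ` with `t = A_n - A_m ≥ 0`, `ρ = ∑ r_f`, `σ = ∑ b_f`. Hence
`Q_n - A_n ≤ T + (ρ t + σ - ψ) / R - t`, and since `ρ ≤ R` the right side is largest at `t = 0`.
-/

lemma le_add_div_of_mul_max_sub_le {R T t L : ℝ} (hR : 0 < R) (h : R * max (t - T) 0 ≤ L) :
    t ≤ T + L / R := by
  have : t - T ≤ L / R := by
    rw [le_div_iff₀ hR, mul_comm]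
    exact (mul_le_mul_of_nonneg_left (le_max_left _ _) hR.le).trans h
  linarith

lemma Finset.sum_mul_add {ι : Type*} (F : Finset ι) (r b : ι → ℝ) (t : ℝ) :
    ∑ f ∈ F, (r f * t + b f) = (∑ f ∈ F, r f) * t + ∑ f ∈ F, b f := by
  rw [Finset.sum_add_distrib, Finset.sum_mul]

lemma mul_add_div_sub_le_div {R ρ t c : ℝ} (hR : 0 < R) (hρ : ρ ≤ R) (ht : 0 ≤ t) :
    (ρ * t + c) / R - t ≤ c / R := by
  rw [div_sub' hR.ne', div_le_div_iff_of_pos_right hR]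
  nlinarith

theorem cbfs_waiting_time_bound_general
    {ι : Type*} (F : Finset ι) (r b : ι → ℝ)
    (A l : ℕ → ℝ) (Q : ℕ → ℝ) (n : ℕ)
    (R T ψ : ℝ)
    (hR : 0 < R)
    (hrate : (∑ f ∈ F, r f) ≤ R)
    (hA : Monotone A)
    (harr : ∀ m ≤ n, (∑ k ∈ Finset.Ico m n, l k) ≤
        (∑ f ∈ F, (r f * (A n - A m) + b f)) - ψ)
    (hserv : ∃ m ≤ n, R * max (Q n - A m - T) 0 ≤ ∑ k ∈ Finset.Ico m n, l k) :
    Q n - A n ≤ T + ((∑ f ∈ F, b f) - ψ) / R := by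
  obtain ⟨m, hmn, hs⟩ := hserv
  have ht : 0 ≤ A n - A m := sub_nonneg.mpr (hA hmn)
  have hdelay : Q n - A m ≤ T + ((∑ f ∈ F, r f) * (A n - A m) + ((∑ f ∈ F, b f) - ψ)) / R := by
    have hL := harr m hmn
    rw [Finset.sum_mul_add, add_sub_assoc] at hL
    exact (le_add_div_of_mul_max_sub_le hR hs).trans
      (add_le_add_right (div_le_div_of_nonneg_right hL hR.le) T)
  linarith [mul_add_div_sub_le_div (c := (∑ f ∈ F, b f) - ψ) hR hrate ht]

/-- Lemma 2: queuing-delay bound in a FIFO rate-latency server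
with regulated affine inputs. -/
theorem cbfs_waiting_time_bound
    {ι : Type*} (F : Finset ι) (r b : ι → ℝ)
    (A l : ℕ → ℝ) (Q : ℕ → ℝ) (n : ℕ)
    (R T ψ : ℝ)
    (hR : 0 < R) (hT : 0 ≤ T) (hψ : 0 ≤ ψ)
    (hr : ∀ f ∈ F, 0 ≤ r f) (hb : ∀ f ∈ F, 0 ≤ b f)
    (hrate : (∑ f ∈ F, r f) ≤ R)
    (hA : Monotone A) (hl : ∀ k, 0 < l k)
    (hQ : A n ≤ Q n)
    (harr : ∀ m ≤ n, (∑ k ∈ Finset.Ico m n, l k) ≤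
        (∑ f ∈ F, (r f * (A n - A m) + b f)) - ψ)
    (hserv : ∃ m ≤ n, R * max (Q n - A m - T) 0 ≤ ∑ k ∈ Finset.Ico m n, l k) :
    Q n - A n ≤ T + ((∑ f ∈ F, b f) - ψ) / R :=
  cbfs_waiting_time_bound_general F r b A l Q n R T ψ hR hrate hA harr hserv
end

section
/- Under the hypotheses of the CBS credit analysis: if the class-x output over [s,t] is O(t) − O(s) = c·Δt⁻ with Δt⁻ = (I·Δt − V(t) − I·Δt⁰)/(I−S), V(t) ≤ V_max, and Δt⁰ ≤ (b + r·(Δt + L̄/c))/c with c > r, then O(t) − O(s) ≥ R·max(Δt − T, 0) where R = I·(c − r)/(I − S) and T = (V_max·c/I + b + r·L̄/c)/(c − r). Hence the CBS offers a rate-latency service curve with rate R and latency T. -/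
/-- the CBS offers a rate-latency service curve with rate
`R = I·(c−r)/(I−S)` and latency `T = (V_max·c/I + b + r·L̄/c)/(c−r)`. -/
theorem cbs_rate_latency_service
    (c r b L I S Vmax Δt Vt Δt0 out : ℝ)
    (hc : r < c) (hr : 0 ≤ r) (hb : 0 ≤ b) (hL : 0 ≤ L)
    (hI : 0 < I) (hS : S < 0) (hVmax : 0 ≤ Vmax)
    (hΔt : 0 ≤ Δt) (hVt0 : 0 ≤ Vt) (hVt : Vt ≤ Vmax)
    (hΔt0nn : 0 ≤ Δt0)
    (hΔt0 : Δt0 ≤ (b + r * Δt + r * L / c) / c)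
    (hout : out = c * (I * Δt - Vt - I * Δt0) / (I - S))
    (hout0 : 0 ≤ out) :
    out ≥ (I * (c - r) / (I - S)) *
        max (Δt - (Vmax * c / I + b + r * L / c) / (c - r)) 0 := by
  have hc0 : (0:ℝ) < c := lt_of_le_of_lt hr hc
  have hIS : (0:ℝ) < I - S := by linarith
  have hcr : (0:ℝ) < c - r := by linarith
  have h1 : c * Δt0 ≤ b + r * Δt + r * L / c := by
    rw [le_div_iff₀ hc0] at hΔt0; linarith [mul_comm Δt0 c]
  rcases le_total (Δt - (Vmax * c / I + b + r * L / c) / (c - r)) 0 with h | h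
  · rw [max_eq_right h, mul_zero]; linarith
  · rw [max_eq_left h, ge_iff_le, div_mul_eq_mul_div, hout, div_le_div_iff₀ hIS hIS]
    apply mul_le_mul_of_nonneg_right _ hIS.le
    have h2 : (c - r) * ((Vmax * c / I + b + r * L / c) / (c - r)) =
        Vmax * c / I + b + r * L / c := mul_div_cancel₀ _ (ne_of_gt hcr)
    have h3 : I * (Vmax * c / I) = Vmax * c := by field_simp
    have h6 : I * ((c - r) * ((Vmax * c / I + b + r * L / c) / (c - r))) =
        Vmax * c + I * b + I * (r * L / c) := by rw [h2, mul_add, mul_add, h3]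
    have h4 := mul_le_mul_of_nonneg_left h1 hI.le
    have h5 := mul_le_mul_of_nonneg_left hVt hc0.le
    nlinarith [h4, h5, h6]
end
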